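/- Let 𝕋 = {(z,w) ∈ ℂ² : |z| < |w| < 1} be the Hartogs triangle. For every point p = (z,w) ∈ 𝕋, the Euclidean distance from p to the boundary b𝕋 equals min{(|w| − |z|)/√2, 1 − |w|}. -/

import Mathlib

open MeasureTheory

noncomputable section

/-- `ℂ² ≅ ℝ⁴` with the Euclidean norm. -/
abbrev E4 := EuclideanSpace ℝ (Fin 4)

/-- The first complex coordinate of a point of `ℝ⁴ ≅ ℂ²`. -/
def zCoord (x : E4) : ℂ := (x 0 : ℂ) + (x 1 : ℂ) * Complex.I

/-- The second complex coordinate of a point of `ℝ⁴ ≅ ℂ²`. -/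
def wCoord (x : E4) : ℂ := (x 2 : ℂ) + (x 3 : ℂ) * Complex.I

/-- The Hartogs triangle `𝕋 = {(z,w) ∈ ℂ² : |z| < |w| < 1}`. -/
def Hartogs : Set E4 :=
  {x | ‖zCoord x‖ < ‖wCoord x‖ ∧ ‖wCoord x‖ < 1}

namespace HartogsAux

/-- Build a point of `E4` from two complex numbers. -/
def mk (z w : ℂ) : E4 := (WithLp.equiv 2 (Fin 4 → ℝ)).symm ![z.re, z.im, w.re, w.im]

@[simp] lemma mk_apply0 (z w : ℂ) : mk z w 0 = z.re := rfl
@[simp] lemma mk_apply1 (z w : ℂ) : mk z w 1 = z.im := rfl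
@[simp] lemma mk_apply2 (z w : ℂ) : mk z w 2 = w.re := rfl
@[simp] lemma mk_apply3 (z w : ℂ) : mk z w 3 = w.im := rfl

@[simp] lemma zCoord_mk (z w : ℂ) : zCoord (mk z w) = z := by
  simp [zCoord, Complex.re_add_im]

@[simp] lemma wCoord_mk (z w : ℂ) : wCoord (mk z w) = w := by
  simp [wCoord, Complex.re_add_im]

lemma dist_sq (x y : E4) :
    dist x y ^ 2 =
      ‖zCoord x - zCoord y‖ ^ 2 + ‖wCoord x - wCoord y‖ ^ 2 := by
  rw [EuclideanSpace.dist_eq, Real.sq_sqrt (by positivity)]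
  have hz : ‖zCoord x - zCoord y‖ ^ 2 = (x 0 - y 0) ^ 2 + (x 1 - y 1) ^ 2 := by
    rw [Complex.sq_norm, Complex.normSq_apply]
    simp [zCoord]
    ring
  have hw : ‖wCoord x - wCoord y‖ ^ 2 = (x 2 - y 2) ^ 2 + (x 3 - y 3) ^ 2 := by
    rw [Complex.sq_norm, Complex.normSq_apply]
    simp [wCoord]
    ring
  rw [hz, hw, Fin.sum_univ_four]
  simp [Real.dist_eq, sq_abs]
  ring

lemma abs_z_sub_le (x y : E4) : ‖zCoord x - zCoord y‖ ≤ dist x y := by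
  have h := dist_sq x y
  nlinarith [norm_nonneg (zCoord x - zCoord y), norm_nonneg (wCoord x - wCoord y),
    dist_nonneg (x := x) (y := y), sq_nonneg (‖wCoord x - wCoord y‖)]

lemma abs_w_sub_le (x y : E4) : ‖wCoord x - wCoord y‖ ≤ dist x y := by
  have h := dist_sq x y
  nlinarith [norm_nonneg (zCoord x - zCoord y), norm_nonneg (wCoord x - wCoord y),
    dist_nonneg (x := x) (y := y)]

/-- The candidate distance function. -/
def f (x : E4) : ℝ :=
  min ((‖wCoord x‖ - ‖zCoord x‖) / Real.sqrt 2)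
    (1 - ‖wCoord x‖)

lemma f_lip (x y : E4) : f x ≤ f y + dist x y := by
  have ha := abs_z_sub_le x y
  have hb := abs_w_sub_le x y
  have hza : |‖zCoord x‖ - ‖zCoord y‖| ≤
      ‖zCoord x - zCoord y‖ :=
    abs_norm_sub_norm_le _ _
  have hwa : |‖wCoord x‖ - ‖wCoord y‖| ≤
      ‖wCoord x - wCoord y‖ :=
    abs_norm_sub_norm_le _ _
  have hza' := abs_le.mp hza
  have hwa' := abs_le.mp hwa
  have hd := dist_sq x y
  have hs2 : (0:ℝ) < Real.sqrt 2 := Real.sqrt_pos.mpr (by norm_num)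
  have hs2sq : Real.sqrt 2 ^ 2 = 2 := Real.sq_sqrt (by norm_num)
  set a := ‖zCoord x - zCoord y‖ with ha'
  set b := ‖wCoord x - wCoord y‖ with hb'
  have ha0 : 0 ≤ a := norm_nonneg _
  have hb0 : 0 ≤ b := norm_nonneg _
  have hd0 : 0 ≤ dist x y := dist_nonneg
  have key : a + b ≤ Real.sqrt 2 * dist x y := by
    have hsq : (a + b)^2 ≤ 2 * dist x y ^ 2 := by nlinarith [sq_nonneg (a - b)]
    have h1 : a + b = Real.sqrt ((a + b)^2) := (Real.sqrt_sq (by linarith)).symm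
    have h2 : Real.sqrt (2 * dist x y ^ 2) = Real.sqrt 2 * dist x y := by
      rw [Real.sqrt_mul (by norm_num), Real.sqrt_sq hd0]
    rw [h1, ← h2]
    exact Real.sqrt_le_sqrt hsq
  have h1 : (‖wCoord x‖ - ‖zCoord x‖) / Real.sqrt 2 ≤
      (‖wCoord y‖ - ‖zCoord y‖) / Real.sqrt 2 + dist x y := by
    rw [div_add' _ _ _ (ne_of_gt hs2), div_le_div_iff_of_pos_right hs2]
    nlinarith [hza'.1, hza'.2, hwa'.1, hwa'.2]
  have h2 : 1 - ‖wCoord x‖ ≤ 1 - ‖wCoord y‖ + dist x y := by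
    nlinarith [hwa'.1, hwa'.2]
  show min _ _ ≤ min _ _ + dist x y
  rw [← min_add_add_right]
  exact le_min (le_trans (min_le_left _ _) h1) (le_trans (min_le_right _ _) h2)

lemma continuous_zCoord : Continuous zCoord := by
  unfold zCoord
  have h0 : Continuous fun x : E4 => x 0 := (EuclideanSpace.proj (𝕜 := ℝ) (0 : Fin 4)).continuous
  have h1 : Continuous fun x : E4 => x 1 := (EuclideanSpace.proj (𝕜 := ℝ) (1 : Fin 4)).continuous
  fun_prop

lemma continuous_wCoord : Continuous wCoord := by
  unfold wCoord
  have h2 : Continuous fun x : E4 => x 2 := (EuclideanSpace.proj (𝕜 := ℝ) (2 : Fin 4)).continuous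
  have h3 : Continuous fun x : E4 => x 3 := (EuclideanSpace.proj (𝕜 := ℝ) (3 : Fin 4)).continuous
  fun_prop

lemma isOpen_hartogs : IsOpen Hartogs := by
  have h1 : IsOpen {x : E4 | ‖zCoord x‖ < ‖wCoord x‖} :=
    isOpen_lt (continuous_norm.comp continuous_zCoord)
      (continuous_norm.comp continuous_wCoord)
  have h2 : IsOpen {x : E4 | ‖wCoord x‖ < 1} :=
    isOpen_lt (continuous_norm.comp continuous_wCoord) continuous_const
  exact (h1.inter h2)

lemma closure_subset : closure Hartogs ⊆
    {x : E4 | ‖zCoord x‖ ≤ ‖wCoord x‖ ∧ ‖wCoord x‖ ≤ 1} := by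
  apply closure_minimal
  · intro x hx; exact ⟨le_of_lt hx.1, le_of_lt hx.2⟩
  · exact IsClosed.inter
      (isClosed_le (continuous_norm.comp continuous_zCoord)
        (continuous_norm.comp continuous_wCoord))
      (isClosed_le (continuous_norm.comp continuous_wCoord) continuous_const)

lemma f_nonpos_of_frontier {q : E4} (hq : q ∈ frontier Hartogs) : f q ≤ 0 := by
  have hcl : q ∈ closure Hartogs := hq.1
  have hle := closure_subset hcl
  have hni : q ∉ Hartogs := by
    intro h
    exact hq.2 (by rwa [isOpen_hartogs.interior_eq])
  have hs2 : (0:ℝ) < Real.sqrt 2 := Real.sqrt_pos.mpr (by norm_num)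
  by_cases h : ‖zCoord q‖ < ‖wCoord q‖
  · -- then |w q| ≥ 1, so second term ≤ 0
    have : ¬ ‖wCoord q‖ < 1 := fun h1 => hni ⟨h, h1⟩
    exact le_trans (min_le_right _ _) (by linarith [not_lt.mp this])
  · exact le_trans (min_le_left _ _)
      (div_nonpos_of_nonpos_of_nonneg (by linarith [not_lt.mp h]) (le_of_lt hs2))

/-- Points with `|z| ≤ |w| ≤ 1`, `w ≠ 0` are in the closure of the Hartogs triangle. -/
lemma mem_closure_of (z w : ℂ) (hzw : ‖z‖ ≤ ‖w‖)
    (hw1 : ‖w‖ ≤ 1) (hw0 : w ≠ 0) : mk z w ∈ closure Hartogs := by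
  rw [Metric.mem_closure_iff]
  intro ε hε
  set δ : ℝ := min (1/2) (ε/3) with hδdef
  have hδ0 : 0 < δ := lt_min (by norm_num) (by linarith)
  have hδh : δ ≤ 1/2 := min_le_left _ _
  have hδε : δ ≤ ε/3 := min_le_right _ _
  set t : ℝ := 1 - δ with htdef
  have ht0 : 0 < t := by simp only [htdef]; linarith
  have ht1 : t < 1 := by simp only [htdef]; linarith
  have hw0' : 0 < ‖w‖ := norm_pos_iff.mpr hw0
  have habs : ∀ (c : ℝ) (v : ℂ), ‖c • v‖ = |c| * ‖v‖ := by
    intro c v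
    rw [Complex.real_smul, norm_mul, Complex.norm_real, Real.norm_eq_abs]
  refine ⟨mk ((t^2 : ℝ) • z) ((t : ℝ) • w), ?_, ?_⟩
  · refine ⟨?_, ?_⟩
    · rw [zCoord_mk, wCoord_mk, habs, habs, abs_of_nonneg (sq_nonneg t), abs_of_pos ht0]
      calc t^2 * ‖z‖ ≤ t^2 * ‖w‖ :=
            mul_le_mul_of_nonneg_left hzw (sq_nonneg t)
        _ < t * ‖w‖ := by
            nlinarith [mul_pos (mul_pos ht0 hw0') (show (0:ℝ) < 1 - t by linarith)]
    · rw [wCoord_mk, habs, abs_of_pos ht0]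
      calc t * ‖w‖ ≤ t * 1 := mul_le_mul_of_nonneg_left hw1 (le_of_lt ht0)
        _ < 1 := by linarith
  · have hds : dist (mk z w) (mk ((t^2 : ℝ) • z) ((t : ℝ) • w)) ^ 2 =
        ‖z - (t^2 : ℝ) • z‖ ^ 2 + ‖w - (t : ℝ) • w‖ ^ 2 := by
      rw [dist_sq]; simp
    have h1 : ‖z - (t^2 : ℝ) • z‖ = (1 - t^2) * ‖z‖ := by
      have : z - (t^2 : ℝ) • z = ((1 - t^2 : ℝ) : ℂ) * z := by
        push_cast; ring_nf; rw [Complex.real_smul]; push_cast; ring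
      rw [this, norm_mul, Complex.norm_real, Real.norm_eq_abs, abs_of_nonneg (by nlinarith)]
    have h2 : ‖w - (t : ℝ) • w‖ = (1 - t) * ‖w‖ := by
      have : w - (t : ℝ) • w = ((1 - t : ℝ) : ℂ) * w := by
        rw [Complex.real_smul]; push_cast; ring
      rw [this, norm_mul, Complex.norm_real, Real.norm_eq_abs, abs_of_nonneg (by linarith)]
    have habsz1 : ‖z‖ ≤ 1 := le_trans hzw hw1
    have hbound : dist (mk z w) (mk ((t^2 : ℝ) • z) ((t : ℝ) • w)) ^ 2 ≤ (2*δ)^2 + δ^2 := by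
      rw [hds, h1, h2]
      have e1 : 1 - t^2 ≤ 2*δ := by simp only [htdef]; nlinarith
      have e2 : (1:ℝ) - t = δ := by simp only [htdef]; ring
      have g1 : (1 - t^2) * ‖z‖ ≤ 2*δ := by
        nlinarith [norm_nonneg z]
      have g2 : (1 - t) * ‖w‖ ≤ δ := by
        nlinarith [norm_nonneg w]
      nlinarith [mul_nonneg (by nlinarith : (0:ℝ) ≤ 1 - t^2) (norm_nonneg z),
        mul_nonneg (by linarith : (0:ℝ) ≤ 1 - t) (norm_nonneg w)]
    have hdn : (0:ℝ) ≤ dist (mk z w) (mk ((t^2 : ℝ) • z) ((t : ℝ) • w)) := dist_nonneg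
    nlinarith [hδ0, hδε, hε]

end HartogsAux

open HartogsAux in
/-- For every `p = (z,w)` in the Hartogs triangle `𝕋`, the Euclidean distance from `p`
to the boundary `b𝕋` equals `min{(|w| - |z|)/√2, 1 - |w|}`. -/
theorem dist_to_boundary_hartogs (p : E4) (hp : p ∈ Hartogs) :
    Metric.infDist p (frontier Hartogs) =
      min ((‖wCoord p‖ - ‖zCoord p‖) / Real.sqrt 2)
        (1 - ‖wCoord p‖) := by
  obtain ⟨hzw, hw1⟩ := hp
  set z := zCoord p with hz'
  set w := wCoord p with hw'
  set r := ‖z‖ with hr'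
  set s := ‖w‖ with hs'
  have hr0 : 0 ≤ r := norm_nonneg z
  have hs0 : 0 < s := lt_of_le_of_lt hr0 hzw
  have hw0 : w ≠ 0 := by
    intro h; rw [h] at hs'; simp at hs'; exact absurd hs' (ne_of_gt hs0)
  have hs2 : (0:ℝ) < Real.sqrt 2 := Real.sqrt_pos.mpr (by norm_num)
  have hs2sq : Real.sqrt 2 ^ 2 = 2 := Real.sq_sqrt (by norm_num)
  have hpmk : p = mk z w := by
    apply PiLp.ext
    intro i
    fin_cases i <;>
      simp [mk, zCoord, wCoord, hz', hw', Complex.add_re, Complex.add_im]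
  -- boundary point 1 : (z, w/|w|)
  set q1 : E4 := mk z ((s⁻¹ : ℝ) • w) with hq1
  have hq1w : ‖wCoord q1‖ = 1 := by
    rw [hq1, wCoord_mk, Complex.real_smul, norm_mul, Complex.norm_real, Real.norm_eq_abs,
      abs_of_pos (inv_pos.mpr hs0), ← hs']
    field_simp
  have hq1z : ‖zCoord q1‖ = r := by rw [hq1, zCoord_mk]
  have hq1_not : q1 ∉ Hartogs := by
    intro h
    rw [Hartogs, Set.mem_setOf_eq, hq1w] at h
    exact lt_irrefl 1 h.2
  have hq1_cl : q1 ∈ closure Hartogs := by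
    apply mem_closure_of
    · rw [Complex.real_smul, norm_mul, Complex.norm_real, Real.norm_eq_abs, abs_of_pos (inv_pos.mpr hs0), ← hs']
      rw [inv_mul_cancel₀ (ne_of_gt hs0)]
      exact le_trans (le_of_lt hzw) (le_of_lt hw1)
    · rw [Complex.real_smul, norm_mul, Complex.norm_real, Real.norm_eq_abs, abs_of_pos (inv_pos.mpr hs0), ← hs',
        inv_mul_cancel₀ (ne_of_gt hs0)]
    · simp [hw0, ne_of_gt hs0]
  have hq1_fr : q1 ∈ frontier Hartogs := by
    constructor
    · exact hq1_cl
    · rwa [isOpen_hartogs.interior_eq]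
  have hd1 : dist p q1 = 1 - s := by
    have h : dist p q1 ^ 2 = (1 - s)^2 := by
      rw [dist_sq, hq1, hpmk]
      simp only [zCoord_mk, wCoord_mk, sub_self, norm_zero]
      have : w - (s⁻¹ : ℝ) • w = ((1 - s⁻¹ : ℝ) : ℂ) * w := by
        rw [Complex.real_smul]; push_cast; ring
      rw [this, norm_mul, Complex.norm_real, Real.norm_eq_abs, ← hs']
      have : |1 - s⁻¹| = s⁻¹ - 1 := by
        rw [abs_of_nonpos]
        · ring
        · have : 1 ≤ s⁻¹ := le_inv_of_le_inv₀ hs0 (by simpa using le_of_lt hw1)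
          linarith
      rw [this]
      have : (s⁻¹ - 1) * s = 1 - s := by field_simp
      rw [this]; ring_nf
    have h1s : 0 ≤ 1 - s := by linarith
    nlinarith [dist_nonneg (x := p) (y := q1)]
  -- boundary point 2 : radially centered
  set m : ℝ := (r + s) / 2 with hm'
  have hm0 : 0 < m := by simp only [hm']; linarith
  have hmr : r < m := by simp only [hm']; linarith
  have hms : m < s := by simp only [hm']; linarith
  set u : ℂ := if z = 0 then (s⁻¹ : ℝ) • w else (r⁻¹ : ℝ) • z with hu'
  have hu1 : ‖u‖ = 1 := by
    by_cases h : z = 0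
    · simp only [hu', if_pos h]
      rw [Complex.real_smul, norm_mul, Complex.norm_real, Real.norm_eq_abs, abs_of_pos (inv_pos.mpr hs0), ← hs',
        inv_mul_cancel₀ (ne_of_gt hs0)]
    · have hr0' : 0 < r := by
        rw [hr']; exact norm_pos_iff.mpr h
      simp only [hu', if_neg h]
      rw [Complex.real_smul, norm_mul, Complex.norm_real, Real.norm_eq_abs, abs_of_pos (inv_pos.mpr hr0'), ← hr',
        inv_mul_cancel₀ (ne_of_gt hr0')]
  have hu2 : z = (r : ℂ) * u := by
    by_cases h : z = 0
    · have : r = 0 := by rw [hr', h]; simp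
      rw [h, this]; simp
    · have hr0' : 0 < r := by rw [hr']; exact norm_pos_iff.mpr h
      simp only [hu', if_neg h]
      rw [Complex.real_smul]
      rw [← mul_assoc, ← Complex.ofReal_mul, mul_inv_cancel₀ (ne_of_gt hr0')]
      simp
  set q2 : E4 := mk ((m : ℂ) * u) (((m / s : ℝ) : ℂ) * w) with hq2
  have hq2z : ‖zCoord q2‖ = m := by
    rw [hq2, zCoord_mk, norm_mul, Complex.norm_real, Real.norm_eq_abs, hu1, abs_of_pos hm0, mul_one]
  have hq2w : ‖wCoord q2‖ = m := by
    rw [hq2, wCoord_mk, norm_mul, Complex.norm_real, Real.norm_eq_abs, ← hs',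
      abs_of_pos (div_pos hm0 hs0)]
    field_simp
  have hq2_not : q2 ∉ Hartogs := by
    intro h
    rw [Hartogs, Set.mem_setOf_eq, hq2z, hq2w] at h
    exact lt_irrefl m h.1
  have hq2_cl : q2 ∈ closure Hartogs := by
    apply mem_closure_of
    · rw [norm_mul, norm_mul, Complex.norm_real, Real.norm_eq_abs, Complex.norm_real, Real.norm_eq_abs, hu1, ← hs',
        abs_of_pos hm0, abs_of_pos (div_pos hm0 hs0)]
      rw [mul_one, div_mul_cancel₀ _ (ne_of_gt hs0)]
    · rw [norm_mul, Complex.norm_real, Real.norm_eq_abs, ← hs', abs_of_pos (div_pos hm0 hs0),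
        div_mul_cancel₀ _ (ne_of_gt hs0)]
      linarith
    · intro h
      rw [mul_eq_zero] at h
      rcases h with h | h
      · rw [Complex.ofReal_eq_zero] at h
        exact absurd h (ne_of_gt (div_pos hm0 hs0))
      · exact hw0 h
  have hq2_fr : q2 ∈ frontier Hartogs := by
    constructor
    · exact hq2_cl
    · rwa [isOpen_hartogs.interior_eq]
  have hd2 : dist p q2 = (s - r) / Real.sqrt 2 := by
    have h : dist p q2 ^ 2 = (s - r)^2 / 2 := by
      rw [dist_sq, hq2, hpmk]
      simp only [zCoord_mk, wCoord_mk]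
      have e1 : z - (m : ℂ) * u = ((r - m : ℝ) : ℂ) * u := by
        rw [hu2]; push_cast; ring
      have e2 : w - ((m / s : ℝ) : ℂ) * w = ((1 - m / s : ℝ) : ℂ) * w := by
        push_cast; ring
      rw [e1, e2, norm_mul, norm_mul, Complex.norm_real, Real.norm_eq_abs, Complex.norm_real, Real.norm_eq_abs, hu1, ← hs']
      rw [abs_of_nonpos (by linarith), abs_of_nonneg
        (by rw [sub_nonneg]; exact le_of_lt ((div_lt_one hs0).mpr hms))]
      have : (1 - m / s) * s = s - m := by field_simp
      rw [this, mul_one]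
      simp only [hm']
      ring
    have hd0 : 0 ≤ dist p q2 := dist_nonneg
    have hrhs : (s - r) / Real.sqrt 2 ≥ 0 := div_nonneg (by linarith) (le_of_lt hs2)
    have : ((s - r) / Real.sqrt 2) ^ 2 = (s - r)^2 / 2 := by
      rw [div_pow, hs2sq]
    nlinarith
  -- conclusion
  have hne : (frontier Hartogs).Nonempty := ⟨q1, hq1_fr⟩
  apply le_antisymm
  · apply le_min
    · calc Metric.infDist p (frontier Hartogs) ≤ dist p q2 :=
            Metric.infDist_le_dist_of_mem hq2_fr
        _ = (s - r) / Real.sqrt 2 := hd2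
    · calc Metric.infDist p (frontier Hartogs) ≤ dist p q1 :=
            Metric.infDist_le_dist_of_mem hq1_fr
        _ = 1 - s := hd1
  · by_contra hlt
    push_neg at hlt
    obtain ⟨y, hy, hdy⟩ := (Metric.infDist_lt_iff hne).mp hlt
    have h1 := f_lip p y
    have h2 := f_nonpos_of_frontier hy
    have : f p = min ((s - r) / Real.sqrt 2) (1 - s) := rfl
    rw [this] at h1
    linarith
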